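/- For every k ∈ ℤ∖{0} and for both choices of sign, Re λ_k^± ≤ −1/2. -/
import Mathlib


/-- The hyperbolic eigenvalue branch `λ_k⁺ = (-(k² - 2ik) + √(k⁴ - 4k²))/2`, with the
principal complex square root. -/
noncomputable def lamP (k : ℤ) : ℂ :=
  (-((k:ℂ)^2 - 2*Complex.I*(k:ℂ)) + ((k:ℂ)^4 - 4*(k:ℂ)^2) ^ ((1:ℂ)/2)) / 2

/-- The parabolic eigenvalue branch `λ_k⁻ = (-(k² - 2ik) - √(k⁴ - 4k²))/2`, with the
principal complex square root. -/
noncomputable def lamM (k : ℤ) : ℂ :=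
  (-((k:ℂ)^2 - 2*Complex.I*(k:ℂ)) - ((k:ℂ)^4 - 4*(k:ℂ)^2) ^ ((1:ℂ)/2)) / 2

lemma cpow_half_re_neg (x : ℝ) (hx : x < 0) : (((x:ℂ)) ^ ((1:ℂ)/2)).re = 0 := by
  have hx0 : (x:ℂ) ≠ 0 := by exact_mod_cast hx.ne
  rw [Complex.cpow_def_of_ne_zero hx0, Complex.exp_re]
  have him : (Complex.log x * ((1:ℂ)/2)).im = Real.pi / 2 := by
    rw [Complex.mul_im]
    simp [Complex.log_im, Complex.arg_ofReal_of_neg hx]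
    ring
  rw [him, Real.cos_pi_div_two, mul_zero]

lemma cpow_half_re_nonneg (x : ℝ) (hx : 0 ≤ x) :
    (((x:ℂ)) ^ ((1:ℂ)/2)).re = Real.sqrt x := by
  rw [show ((1:ℂ)/2) = (((1/2 : ℝ)) : ℂ) by norm_num, ← Complex.ofReal_cpow hx]
  rw [Complex.ofReal_re, Real.sqrt_eq_rpow]

/-- **Uniform spectral gap:** for every `k ≠ 0` and both signs, `Re λ_k^± ≤ -1/2`. -/
theorem eigenvalue_real_part_le :
    ∀ k : ℤ, k ≠ 0 → (lamP k).re ≤ -(1/2) ∧ (lamM k).re ≤ -(1/2) := by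
  intro k hk
  have hk1 : (1:ℝ) ≤ (k:ℝ)^2 := by
    have h := Int.one_le_abs hk
    have : (1:ℤ) ≤ k^2 := by nlinarith [sq_abs k]
    exact_mod_cast this
  set x : ℝ := (k:ℝ)^4 - 4*(k:ℝ)^2 with hxdef
  have hcast : (k:ℂ)^4 - 4*(k:ℂ)^2 = ((x:ℝ):ℂ) := by rw [hxdef]; push_cast; ring
  set R : ℝ := (((x:ℂ)) ^ ((1:ℂ)/2)).re with hRdef
  have hR : 0 ≤ R := by
    rcases le_or_gt 0 x with h | h
    · rw [hRdef, cpow_half_re_nonneg x h]; exact Real.sqrt_nonneg x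
    · rw [hRdef, cpow_half_re_neg x h]
  have hcast2 : (k:ℂ)^2 = ((((k:ℝ)^2 : ℝ)):ℂ) := by push_cast; ring
  have hcastk : (k:ℂ) = (((k:ℝ)):ℂ) := by push_cast; ring
  have hreP : (lamP k).re = (-((k:ℝ)^2) + R)/2 := by
    rw [lamP, hcast, hcast2, hcastk, Complex.div_ofNat_re]
    simp only [Complex.add_re, Complex.neg_re, Complex.sub_re, Complex.mul_re,
      Complex.mul_im, Complex.I_re, Complex.I_im, Complex.ofReal_re, Complex.ofReal_im,
      Complex.re_ofNat, Complex.im_ofNat, hRdef]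
    ring
  have hreM : (lamM k).re = (-((k:ℝ)^2) - R)/2 := by
    rw [lamM, hcast, hcast2, hcastk, Complex.div_ofNat_re]
    simp only [Complex.sub_re, Complex.neg_re, Complex.mul_re,
      Complex.mul_im, Complex.I_re, Complex.I_im, Complex.ofReal_re, Complex.ofReal_im,
      Complex.re_ofNat, Complex.im_ofNat, hRdef]
    ring
  constructor
  · rw [hreP]
    rcases le_or_gt 0 x with h | h
    · have hk4 : (4:ℝ) ≤ (k:ℝ)^2 := by nlinarith
      have hsq : Real.sqrt x ≤ (k:ℝ)^2 - 2 := by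
        have h1 : x ≤ ((k:ℝ)^2 - 2)^2 := by nlinarith
        calc Real.sqrt x ≤ Real.sqrt (((k:ℝ)^2 - 2)^2) := Real.sqrt_le_sqrt h1
          _ = |(k:ℝ)^2 - 2| := Real.sqrt_sq_eq_abs _
          _ = (k:ℝ)^2 - 2 := abs_of_nonneg (by linarith)
      rw [hRdef, cpow_half_re_nonneg x h]
      linarith
    · rw [hRdef, cpow_half_re_neg x h]
      linarith
  · rw [hreM]
    linarith
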